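/- arXiv:2509.14017 — 2 statements merged into one kernel-verified Lean document; each statement's English description precedes it below -/
import Mathlib

section
/- Let -∞ < b < c < d < ∞, let μ be a finite Radon measure on [c,d], and set t = b + √((d-b)(c-b)). Then the integral operator from L²_μ([c,d]) to L¹((-∞,b]) with kernel ((y-t)/(t-z))·1/(y-z) has operator norm at most (1/2)·μ([c,d])^{1/2}·log((d-b)/(c-b)). -/
/-! By Tonelli, it suffices to bound `∫_{z ≤ b} |k(z, y)| dz` uniformly in `y ∈ [c, d]`, where
`k(z, y) = (y - t)/((t - z)(y - z))`, and then to use `‖g‖₁ ≤ μ([c, d])^{1/2} ‖g‖₂`. Since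
`k(z, y) = 1/(t - z) - 1/(y - z)` has constant sign for `z ≤ b`, that integral is
`|log (y - b) - log (t - b)|`; the choice of `t` puts `log (t - b)` at the midpoint of
`[log (c - b), log (d - b)]`, which gives the bound `½ log ((d - b)/(c - b))`. -/

open MeasureTheory ENNReal Set Function

section
variable {α β E : Type*} [MeasurableSpace α] [MeasurableSpace β] {μ : Measure α} {ν : Measure β}
  [NormedAddCommGroup E] [NormedSpace ℝ E]

theorem lintegral_enorm_integral_smul_le [SFinite μ] [SFinite ν] {K : β → α → ℝ}
    (hK : Measurable (uncurry K)) {g : α → E} (hg : AEStronglyMeasurable g μ) {C : ℝ≥0∞}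
    (hC : ∀ᵐ y ∂μ, ∫⁻ z, ‖K z y‖ₑ ∂ν ≤ C) :
    ∫⁻ z, ‖∫ y, K z y • g y ∂μ‖ₑ ∂ν ≤ C * eLpNorm g 1 μ := by
  have hKg : AEMeasurable (uncurry fun z y ↦ ‖K z y • g y‖ₑ) (ν.prod μ) :=
    (hK.aestronglyMeasurable.smul hg.comp_snd).enorm
  calc ∫⁻ z, ‖∫ y, K z y • g y ∂μ‖ₑ ∂ν
      ≤ ∫⁻ z, ∫⁻ y, ‖K z y • g y‖ₑ ∂μ ∂ν :=
        lintegral_mono fun z ↦ enorm_integral_le_lintegral_enorm _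
    _ = ∫⁻ y, (∫⁻ z, ‖K z y‖ₑ ∂ν) * ‖g y‖ₑ ∂μ := by
        rw [lintegral_lintegral_swap hKg]
        simp only [enorm_smul]
        exact lintegral_congr fun y ↦ lintegral_mul_const' _ _ (enorm_ne_top (x := g y))
    _ ≤ ∫⁻ y, C * ‖g y‖ₑ ∂μ := lintegral_mono_ae (hC.mono fun y hy ↦ by gcongr)
    _ = C * eLpNorm g 1 μ := by
        rw [lintegral_const_mul'' _ hg.enorm, eLpNorm_one_eq_lintegral_enorm]

/-- On the atom `{a}` every function is measurable, and off it `g = f⁻¹ • (f • g)`. -/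
theorem integral_smul_eq_zero_of_not_aestronglyMeasurable [MeasurableSingletonClass α]
    {f : α → ℝ} {g : α → E} {a : α} (hf : AEMeasurable f μ) (hzero : ∀ᵐ y ∂μ, f y = 0 → y = a)
    (hg : ¬AEStronglyMeasurable g μ) :
    ∫ y, f y • g y ∂μ = 0 := by
  refine integral_undef fun hfg ↦ hg ?_
  rw [← Measure.restrict_add_restrict_compl (μ := μ) (measurableSet_singleton a),
    aestronglyMeasurable_add_measure_iff, Measure.restrict_singleton]
  refine ⟨aestronglyMeasurable_dirac.smul_measure _, ?_⟩
  refine (hf.inv.aestronglyMeasurable.smul hfg.aestronglyMeasurable).restrict.congr ?_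
  filter_upwards [ae_restrict_mem (measurableSet_singleton a).compl, ae_restrict_of_ae hzero]
    with y hya hy
  exact inv_smul_smul₀ (fun h ↦ hya (hy h)) (g y)

end

theorem abs_log_sub_log_sqrt_mul_le {c d y : ℝ} (hc : 0 < c) (hcy : c ≤ y) (hyd : y ≤ d) :
    |Real.log y - Real.log (Real.sqrt (d * c))| ≤ 1 / 2 * Real.log (d / c) := by
  have hd : 0 < d := by linarith
  rw [Real.log_sqrt (by positivity), Real.log_mul hd.ne' hc.ne', Real.log_div hd.ne' hc.ne']
  have hlc : Real.log c ≤ Real.log y := Real.log_le_log hc hcy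
  have hld : Real.log y ≤ Real.log d := Real.log_le_log (by linarith) hyd
  rw [abs_le]
  constructor <;> linarith

theorem lintegral_Iic_sub_div_mul_sub_le {b p q : ℝ} (hbp : b < p) (hpq : p ≤ q) :
    ∫⁻ z in Iic b, ENNReal.ofReal ((q - p) / ((p - z) * (q - z))) ≤
      ENNReal.ofReal (Real.log (q - b) - Real.log (p - b)) := by
  set F : ℝ → ℝ := fun z ↦ Real.log (q - z) - Real.log (p - z)
  have hF' : ∀ z < p, HasDerivAt F ((q - p) / ((p - z) * (q - z))) z := by
    intro z hz
    have hpz : p - z ≠ 0 := by linarith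
    have hqz : q - z ≠ 0 := by linarith
    refine ((((hasDerivAt_id z).const_sub q).log hqz).sub
      (((hasDerivAt_id z).const_sub p).log hpz)).congr_deriv ?_
    simp only [id]
    field_simp
    ring
  have hmono : MonotoneOn F (Iic b) := by
    refine monotoneOn_of_hasDerivWithinAt_nonneg (convex_Iic b)
      (fun z hz ↦ (hF' z (by linarith [hz.out])).continuousAt.continuousWithinAt)
      (fun z hz ↦ (hF' z ?_).hasDerivWithinAt) (fun z hz ↦ ?_)
    all_goals rw [interior_Iic] at hz
    · linarith [hz.out]
    · have : z < b := hz
      apply div_nonneg <;> nlinarith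
  have himage : F '' Iic b ⊆ Icc 0 (F b) := by
    rintro _ ⟨z, hz, rfl⟩
    exact ⟨sub_nonneg.2 (Real.log_le_log (by linarith [hz.out]) (by linarith)),
      hmono hz self_mem_Iic hz⟩
  calc ∫⁻ z in Iic b, ENNReal.ofReal ((q - p) / ((p - z) * (q - z)))
      = volume (F '' Iic b) := lintegral_deriv_eq_volume_image_of_monotoneOn measurableSet_Iic
        (fun z hz ↦ (hF' z (by linarith [hz.out])).hasDerivWithinAt) hmono
    _ ≤ volume (Icc 0 (F b)) := measure_mono himage
    _ = ENNReal.ofReal (Real.log (q - b) - Real.log (p - b)) := by simp [F]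

theorem lintegral_Iic_enorm_sub_div_mul_sub_le {b p q : ℝ} (hbp : b < p) (hbq : b < q) :
    ∫⁻ z in Iic b, ‖(q - p) / ((p - z) * (q - z))‖ₑ ≤
      ENNReal.ofReal |Real.log (q - b) - Real.log (p - b)| := by
  wlog hpq : p ≤ q generalizing p q
  · have hswap (z : ℝ) : ‖(q - p) / ((p - z) * (q - z))‖ₑ = ‖(p - q) / ((q - z) * (p - z))‖ₑ := by
      rw [← enorm_neg, ← neg_div, neg_sub, mul_comm]
    simpa only [hswap, abs_sub_comm] using this hbq hbp (le_of_not_ge hpq)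
  calc ∫⁻ z in Iic b, ‖(q - p) / ((p - z) * (q - z))‖ₑ
      = ∫⁻ z in Iic b, ENNReal.ofReal ((q - p) / ((p - z) * (q - z))) := by
        refine setLIntegral_congr_fun measurableSet_Iic fun z hz ↦ Real.enorm_eq_ofReal ?_
        have : z < p := hz.out.trans_lt hbp
        apply div_nonneg <;> nlinarith
    _ ≤ ENNReal.ofReal (Real.log (q - b) - Real.log (p - b)) :=
        lintegral_Iic_sub_div_mul_sub_le hbp hpq
    _ = ENNReal.ofReal |Real.log (q - b) - Real.log (p - b)| := by
        rw [abs_of_nonneg (sub_nonneg.2 (Real.log_le_log (by linarith) (by linarith)))]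

/-- `(φ(z)⁻¹ φ(y)) / (y - z)` for `φ(ξ) = ξ - t`. -/
noncomputable def zolotarevKernel (t z y : ℝ) : ℝ := (y - t) / ((t - z) * (y - z))

theorem measurable_zolotarevKernel (t : ℝ) : Measurable (uncurry (zolotarevKernel t)) := by
  unfold zolotarevKernel
  fun_prop

theorem zolotarevKernel_eq_zero_iff {t z y : ℝ} (hzt : z < t) (hzy : z < y) :
    zolotarevKernel t z y = 0 ↔ y = t := by
  have : (t - z) * (y - z) ≠ 0 := by nlinarith
  simp [zolotarevKernel, this, sub_eq_zero]

theorem lintegral_Iic_enorm_zolotarevKernel_le {b c d t y : ℝ} (hbc : b < c)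
    (ht : t = b + Real.sqrt ((d - b) * (c - b))) (hbt : b < t) (hy : y ∈ Icc c d) :
    ∫⁻ z in Iic b, ‖zolotarevKernel t z y‖ₑ ≤
      ENNReal.ofReal (1 / 2 * Real.log ((d - b) / (c - b))) := by
  refine (lintegral_Iic_enorm_sub_div_mul_sub_le hbt (hbc.trans_le hy.1)).trans
    (ENNReal.ofReal_le_ofReal ?_)
  rw [ht, add_sub_cancel_left]
  exact abs_log_sub_log_sqrt_mul_le (sub_pos.2 hbc) (sub_le_sub_right hy.1 b)
    (sub_le_sub_right hy.2 b)

theorem lintegral_enorm_integral_zolotarevKernel_smul_le {E : Type*} [NormedAddCommGroup E]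
    [NormedSpace ℝ E] {b c d t : ℝ} (hbc : b < c) (hcd : c < d)
    (ht : t = b + Real.sqrt ((d - b) * (c - b))) {μ : Measure ℝ} [SFinite μ]
    (hsupp : μ (Icc c d)ᶜ = 0) (g : ℝ → E) :
    ∫⁻ z in Iic b, ‖∫ y, zolotarevKernel t z y • g y ∂μ‖ₑ ≤
      ENNReal.ofReal (1 / 2 * Real.log ((d - b) / (c - b))) *
        (eLpNorm g 2 μ * μ univ ^ (1 / 2 : ℝ)) := by
  have hbt : b < t := by
    rw [ht, lt_add_iff_pos_right, Real.sqrt_pos]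
    nlinarith [hbc.trans hcd]
  have hμ : ∀ᵐ y ∂μ, y ∈ Icc c d := ae_iff.2 hsupp
  by_cases hg : AEStronglyMeasurable g μ
  · calc ∫⁻ z in Iic b, ‖∫ y, zolotarevKernel t z y • g y ∂μ‖ₑ
        ≤ ENNReal.ofReal (1 / 2 * Real.log ((d - b) / (c - b))) * eLpNorm g 1 μ :=
          lintegral_enorm_integral_smul_le (measurable_zolotarevKernel t) hg
            (hμ.mono fun y hy ↦ lintegral_Iic_enorm_zolotarevKernel_le hbc ht hbt hy)
      _ ≤ _ := by
          gcongr
          exact (eLpNorm_le_eLpNorm_mul_rpow_measure_univ one_le_two hg).trans_eq (by norm_num)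
  · have hzero : ∀ z ∈ Iic b, ∫ y, zolotarevKernel t z y • g y ∂μ = 0 := fun z hz ↦
      integral_smul_eq_zero_of_not_aestronglyMeasurable
        (measurable_zolotarevKernel t).of_uncurry_left.aemeasurable
        (hμ.mono fun y hy ↦ (zolotarevKernel_eq_zero_iff (hz.out.trans_lt hbt)
          (hz.out.trans_lt (hbc.trans_le hy.1))).1) hg
    rw [setLIntegral_congr_fun measurableSet_Iic fun z hz ↦ by rw [hzero z hz, enorm_zero],
      lintegral_zero]
    exact zero_le

/-- With `t = b + √((d-b)(c-b))`, the integral operator from `L²_μ([c,d])` to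
`L¹((-∞,b])` with kernel `((y-t)/(t-z)) · 1/(y-z)` has operator norm at most
`(1/2) · μ([c,d])^{1/2} · log((d-b)/(c-b))`. -/
theorem zolotarev_kernel_opNorm_bound (b c d t : ℝ) (hbc : b < c) (hcd : c < d)
    (ht : t = b + Real.sqrt ((d - b) * (c - b)))
    (μ : Measure ℝ) [IsFiniteMeasure μ] (hsupp : μ (Set.Icc c d)ᶜ = 0)
    (g : ℝ → ℂ) :
    ∫⁻ z in Set.Iic b,
        (‖∫ y, (((y : ℂ) - (t : ℂ)) / ((t : ℂ) - (z : ℂ))) * (g y / ((y : ℂ) - (z : ℂ))) ∂μ‖₊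
          : ℝ≥0∞) ≤
      ENNReal.ofReal
          (1 / 2 * Real.sqrt ((μ Set.univ).toReal) * Real.log ((d - b) / (c - b))) *
        eLpNorm g 2 μ := by
  have hsmul (z y : ℝ) :
      ((y : ℂ) - t) / ((t : ℂ) - z) * (g y / ((y : ℂ) - z)) = zolotarevKernel t z y • g y := by
    simp only [zolotarevKernel, Complex.real_smul]
    push_cast
    rw [div_mul_div_comm, div_mul_eq_mul_div]
  have hsqrt : ENNReal.ofReal (Real.sqrt (μ univ).toReal) = μ univ ^ (1 / 2 : ℝ) := by
    rw [Real.sqrt_eq_rpow, ← ENNReal.ofReal_rpow_of_nonneg ENNReal.toReal_nonneg (by norm_num),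
      ENNReal.ofReal_toReal (measure_ne_top μ _)]
  simp only [hsmul, ← enorm_eq_nnnorm]
  refine (lintegral_enorm_integral_zolotarevKernel_smul_le hbc hcd ht hsupp g).trans_eq ?_
  rw [mul_right_comm, ENNReal.ofReal_mul' (Real.sqrt_nonneg _), hsqrt]
  ring
end

section
/- Let p, q be polynomials of degree at most n with q having no roots in a set E ⊂ ℂ and p having no roots in a set F ⊂ ℂ disjoint from E, and let φ = p/q. Then the kernel C_n(z,y) = (1 - φ(y)/φ(z)) / (y - z), defined for z ∈ F and y ∈ E, has rank at most n: it can be written as a sum of n products f_i(z) g_i(y). -/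
/-!
For fixed `z`, the polynomial `p(z) q(Y) - q(z) p(Y)` has degree at most `n` and vanishes at
`Y = z`, so it equals `(Y - z) R_z(Y)` with `deg R_z < n`. Hence
`C_n(z, y) = R_z(y) / (p(z) q(y)) = ∑_{i < n} (coeff_i R_z / p(z)) · (y^i / q(y))`.
-/

open Polynomial

namespace Polynomial

variable {R : Type*} [CommRing R]

theorem eval_eq_sum_fin_of_degree_lt {p : R[X]} {n : ℕ} (hp : p.degree < n) (x : R) :
    p.eval x = ∑ i : Fin n, p.coeff i * x ^ (i : ℕ) := by
  rw [eval_eq_sum, sum_fin (fun e a => a * x ^ e) (fun _ => zero_mul _) hp]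

noncomputable def crossDivDiff (p q : R[X]) (z : R) : R[X] :=
  (C (p.eval z) * q - C (q.eval z) * p) /ₘ (X - C z)

theorem eval_crossDivDiff_mul (p q : R[X]) (z y : R) :
    (y - z) * (crossDivDiff p q z).eval y = p.eval z * q.eval y - q.eval z * p.eval y := by
  have hroot : IsRoot (C (p.eval z) * q - C (q.eval z) * p) z := by
    simp only [IsRoot, eval_sub, eval_mul, eval_C, mul_comm, sub_self]
  have h := congrArg (eval y) (mul_divByMonic_eq_iff_isRoot.mpr hroot)
  simpa only [crossDivDiff, eval_mul, eval_sub, eval_X, eval_C] using h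

theorem degree_crossDivDiff_lt [Nontrivial R] {p q : R[X]} {n : ℕ}
    (hp : p.natDegree ≤ n) (hq : q.natDegree ≤ n) (z : R) :
    (crossDivDiff p q z).degree < n := by
  unfold crossDivDiff
  set N := C (p.eval z) * q - C (q.eval z) * p
  by_cases hN : N = 0
  · rw [hN, zero_divByMonic, degree_zero]
    exact WithBot.bot_lt_coe n
  have hNdeg : N.natDegree ≤ n := (natDegree_sub_le _ _).trans <|
    max_le ((natDegree_C_mul_le _ _).trans hq) ((natDegree_C_mul_le _ _).trans hp)
  calc (N /ₘ (X - C z)).degree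
      < N.degree := degree_divByMonic_lt N _ hN (by rw [degree_X_sub_C]; exact zero_lt_one)
    _ ≤ n := degree_le_of_natDegree_le hNdeg

end Polynomial

theorem zolotarev_kernel_eq_crossDivDiff {K : Type*} [Field K] (p q : K[X]) {z y : K}
    (hyz : y ≠ z) (hpz : p.eval z ≠ 0) (hqy : q.eval y ≠ 0) :
    (1 - (p.eval y / q.eval y) / (p.eval z / q.eval z)) / (y - z) =
      (crossDivDiff p q z).eval y / (p.eval z * q.eval y) := by
  have hyz' : y - z ≠ 0 := sub_ne_zero.mpr hyz
  have h := eval_crossDivDiff_mul p q z y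
  -- No case split on `q(z) = 0`: `div_div_eq_mul_div` also holds under the convention `x / 0 = 0`.
  rw [div_div_eq_mul_div, eq_div_iff (mul_ne_zero hpz hqy)]
  field_simp
  linear_combination -h

/-- The Zolotarev kernel `C_n(z,y) = (1 - φ(y)/φ(z))/(y - z)` with `φ = p/q` a rational
function of type `(n,n)` has rank at most `n`: it is a sum of `n` separated products. -/
theorem zolotarev_kernel_rank_le (n : ℕ) (p q : Polynomial ℂ)
    (hp : p.natDegree ≤ n) (hq : q.natDegree ≤ n)
    (E F : Set ℂ) (hEF : Disjoint E F)
    (hqE : ∀ y ∈ E, q.eval y ≠ 0) (hpF : ∀ z ∈ F, p.eval z ≠ 0) :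
    ∃ f g : Fin n → ℂ → ℂ, ∀ z ∈ F, ∀ y ∈ E,
      (1 - (p.eval y / q.eval y) / (p.eval z / q.eval z)) / (y - z) =
        ∑ i, f i z * g i y := by
  refine ⟨fun i z => (crossDivDiff p q z).coeff i / p.eval z,
    fun i y => y ^ (i : ℕ) / q.eval y, fun z hz y hy => ?_⟩
  rw [zolotarev_kernel_eq_crossDivDiff p q (hEF.ne_of_mem hy hz) (hpF z hz) (hqE y hy),
    eval_eq_sum_fin_of_degree_lt (degree_crossDivDiff_lt hp hq z), Finset.sum_div]
  refine Finset.sum_congr rfl fun i _ => ?_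
  rw [div_mul_div_comm]
end
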